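/- arXiv:math/0310486 — 2 statements merged into one kernel-verified Lean document; each statement's English description precedes it below -/
import Mathlib

section
/- Let s ≥ 1 and d, p, r be real numbers with r ≥ 0. Suppose there is a real number π such that π − 1 ≤ 3(d − p) + (p² − 3p)/2 − 9 − r and π − 1 ≥ (d² − 2sd + p² − 2p − r)/(2s). Then d² − 8sd + p²(1 − s) + p(9s − 2) + 18s ≤ 0. -/
theorem stmt10 (s d p r : ℝ) (hs : 1 ≤ s) (hr : 0 ≤ r)
    (π : ℝ)
    (hup : π - 1 ≤ 3 * (d - p) + (p ^ 2 - 3 * p) / 2 - 9 - r)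
    (hlow : (d ^ 2 - 2 * s * d + p ^ 2 - 2 * p - r) / (2 * s) ≤ π - 1) :
    d ^ 2 - 8 * s * d + p ^ 2 * (1 - s) + p * (9 * s - 2) + 18 * s ≤ 0 := by
  have hs0 : (0:ℝ) < 2 * s := by linarith
  have h := (div_le_iff₀ hs0).mp (hlow.trans hup)
  nlinarith [mul_nonneg hr (by linarith : (0:ℝ) ≤ 2*s - 1)]
end

section
/- Let φ ∈ k[x₀,…,x₄] be a homogeneous polynomial of degree s that lies in the ideal (x₀, x₁)^{s−2}, written as φ = Σ_{i=0}^{s−2} Q_i(x₀,…,x₄)·x₀^i·x₁^{s−2−i} with each Q_i homogeneous quadratic. If a point x = (0 : 0 : x₂ : x₃ : x₄) satisfies Σ_{i=0}^{s−2} Q_i(αx₁, x₁, x₂, x₃, x₄)·α^i = 0 for all α ∈ k and x₁ arbitrary — equivalently Q_i(x) = 0 for all i — then all partial derivatives of φ of order ≤ s−2 vanish at x. -/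
/-!
Each `Q i`, `X 0` and `X 1` vanishes at `x`, so `φ` lies in the `(s - 1)`-th power of the maximal
ideal of `x`. By the Leibniz rule a derivation maps `I ^ (n + 1)` into `I ^ n`, so every partial
derivative of order at most `s - 2` of `φ` still lies in that maximal ideal.
-/

open MvPolynomial

namespace Derivation

variable {R A : Type*} [CommSemiring R] [CommRing A] [Algebra R A]

theorem map_mem_pow_of_mem_pow_succ (D : Derivation R A A) {I : Ideal A} :
    ∀ {n : ℕ} {a : A}, a ∈ I ^ (n + 1) → D a ∈ I ^ n
  | 0, _, _ => by simp
  | n + 1, a, ha => by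
    rw [pow_succ'] at ha
    refine Submodule.mul_induction_on ha (fun b hb c hc => ?_) (fun _ _ h₁ h₂ => ?_)
    · rw [leibniz, smul_eq_mul, smul_eq_mul]
      refine add_mem ?_ (Ideal.mul_mem_right _ _ hc)
      rw [pow_succ']
      exact Ideal.mul_mem_mul hb (map_mem_pow_of_mem_pow_succ D hc)
    · rw [map_add]
      exact add_mem h₁ h₂

theorem foldl_mem_pow_of_mem_pow_add {ι : Type*} (D : ι → Derivation R A A) {I : Ideal A}
    (n : ℕ) (v : List ι) {a : A} (ha : a ∈ I ^ (n + v.length)) :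
    v.foldl (fun b j => D j b) a ∈ I ^ n := by
  induction v generalizing a with
  | nil => simpa using ha
  | cons j v ih =>
    refine ih (map_mem_pow_of_mem_pow_succ (D j) ?_)
    simpa [← add_assoc] using ha

end Derivation

theorem stmt16_general (k : Type*) [Field k]
    (s : ℕ)
    (φ : MvPolynomial (Fin 5) k)
    (Q : ℕ → MvPolynomial (Fin 5) k)
    (hsum : φ = ∑ i ∈ Finset.range (s - 1), Q i * X 0 ^ i * X 1 ^ (s - 2 - i))
    (x : Fin 5 → k) (hx0 : x 0 = 0) (hx1 : x 1 = 0)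
    (hQx : ∀ i ∈ Finset.range (s - 1), eval x (Q i) = 0) :
    ∀ v : List (Fin 5), v.length ≤ s - 2 →
      eval x (v.foldl (fun q j => pderiv j q) φ) = 0 := by
  set I := RingHom.ker (eval x)
  have hX0 : X 0 ∈ I := by simp [I, hx0]
  have hX1 : X 1 ∈ I := by simp [I, hx1]
  have hφ : φ ∈ I ^ (1 + (s - 2)) := by
    rw [hsum]
    refine sum_mem fun i hi => ?_
    have hi' := Finset.mem_range.mp hi
    have hdeg : 1 + (s - 2) = 1 + i + (s - 2 - i) := by omega
    rw [hdeg, pow_add, pow_add, pow_one]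
    exact Ideal.mul_mem_mul (Ideal.mul_mem_mul (hQx i hi) (Ideal.pow_mem_pow hX0 i))
      (Ideal.pow_mem_pow hX1 _)
  intro v hv
  have hφ' : φ ∈ I ^ (1 + v.length) := Ideal.pow_le_pow_right (by omega) hφ
  simpa [I] using Derivation.foldl_mem_pow_of_mem_pow_add pderiv 1 v hφ'

theorem stmt16 (k : Type*) [Field k] [CharZero k] [IsAlgClosed k]
    (s : ℕ) (hs : 4 ≤ s)
    (φ : MvPolynomial (Fin 5) k) (hφ : φ.IsHomogeneous s)
    (Q : ℕ → MvPolynomial (Fin 5) k)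
    (hQ : ∀ i ∈ Finset.range (s - 1), (Q i).IsHomogeneous 2)
    (hsum : φ = ∑ i ∈ Finset.range (s - 1), Q i * X 0 ^ i * X 1 ^ (s - 2 - i))
    (x : Fin 5 → k) (hx0 : x 0 = 0) (hx1 : x 1 = 0)
    (hQx : ∀ i ∈ Finset.range (s - 1), eval x (Q i) = 0) :
    ∀ v : List (Fin 5), v.length ≤ s - 2 →
      eval x (v.foldl (fun q j => pderiv j q) φ) = 0 :=
  stmt16_general k s φ Q hsum x hx0 hx1 hQx
end
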